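/- arXiv:math/0406458 — 3 statements merged into one kernel-verified Lean document; each statement's English description precedes it below -/
import Mathlib

section
/- Let M be an n×n integer matrix and consider the commuting pair M_1 = M_2 = M. Then ker((1-M^t, 1-M^t) : Z^n ⊕ Z^n → Z^n) / im((M^t-1; 1-M^t) : Z^n → Z^n ⊕ Z^n) is isomorphic to (Z^n / im(1-M^t)) ⊕ ker(1-M^t), via the map sending the class of (x,y) to (x + im(1-M^t)) ⊕ (x+y). -/
open Matrix

/-- For an `n×n` integer matrix `M` (with `M₁ = M₂ = M`), the quotient
`ker((1-Mᵀ, 1-Mᵀ)) / im((Mᵀ-1; 1-Mᵀ))` is isomorphic to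
`(ℤⁿ/im(1-Mᵀ)) ⊕ ker(1-Mᵀ)` via the map sending the class of `(x,y)` to
`(x + im(1-Mᵀ), x + y)`. -/
theorem twograph_equal_vertex_matrices_K1 (n : ℕ)
    (M : Matrix (Fin n) (Fin n) ℤ) :
    ∃ e : (↥(LinearMap.ker
            (LinearMap.coprod (1 - Mᵀ).mulVecLin (1 - Mᵀ).mulVecLin)) ⧸
          (LinearMap.range
              (LinearMap.prod (Mᵀ - 1).mulVecLin (1 - Mᵀ).mulVecLin)).comap
            (LinearMap.ker
              (LinearMap.coprod (1 - Mᵀ).mulVecLin (1 - Mᵀ).mulVecLin)).subtype)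
        ≃ₗ[ℤ]
        ((Fin n → ℤ) ⧸ LinearMap.range (1 - Mᵀ).mulVecLin) ×
          ↥(LinearMap.ker (1 - Mᵀ).mulVecLin),
      ∀ (x y : Fin n → ℤ)
        (hxy : (x, y) ∈ LinearMap.ker
          (LinearMap.coprod (1 - Mᵀ).mulVecLin (1 - Mᵀ).mulVecLin)),
        (e (Submodule.Quotient.mk ⟨(x, y), hxy⟩)).1 = Submodule.Quotient.mk x ∧
        ((e (Submodule.Quotient.mk ⟨(x, y), hxy⟩)).2 : Fin n → ℤ) = x + y := by
  set A : (Fin n → ℤ) →ₗ[ℤ] (Fin n → ℤ) := (1 - Mᵀ).mulVecLin with hA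
  set K := LinearMap.ker (LinearMap.coprod A A) with hK
  set N := (LinearMap.range
      (LinearMap.prod (Mᵀ - 1).mulVecLin (1 - Mᵀ).mulVecLin)).comap K.subtype with hN
  have hB : (Mᵀ - 1).mulVecLin = -A := by
    ext v i
    simp [hA, Matrix.mulVecLin_apply, Matrix.sub_mulVec, Matrix.one_mulVec]
  have hmemK : ∀ p : (Fin n → ℤ) × (Fin n → ℤ),
      p ∈ K ↔ A p.1 + A p.2 = 0 := by
    intro p; rfl
  -- the underlying linear map on K
  let f1 : K →ₗ[ℤ] (Fin n → ℤ) ⧸ LinearMap.range A :=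
    (LinearMap.range A).mkQ ∘ₗ (LinearMap.fst ℤ _ _ ∘ₗ K.subtype)
  have hkerA : ∀ p : K,
      (p : (Fin n → ℤ) × (Fin n → ℤ)).1 + (p : (Fin n → ℤ) × (Fin n → ℤ)).2
        ∈ LinearMap.ker A := by
    intro p
    have := ((hmemK _).1 p.property)
    simpa [LinearMap.mem_ker, map_add] using this
  let F : K →ₗ[ℤ] (Fin n → ℤ) :=
    (LinearMap.fst ℤ (Fin n → ℤ) (Fin n → ℤ)
      + LinearMap.snd ℤ (Fin n → ℤ) (Fin n → ℤ)) ∘ₗ K.subtype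
  let f2 : K →ₗ[ℤ] ↥(LinearMap.ker A) :=
    LinearMap.codRestrict _ F (fun c => hkerA c)
  let f : K →ₗ[ℤ] ((Fin n → ℤ) ⧸ LinearMap.range A) × ↥(LinearMap.ker A) :=
    f1.prod f2
  have hle : N ≤ LinearMap.ker f := by
    rintro ⟨p, hp⟩ hmem
    obtain ⟨z, hz⟩ := hmem
    have hz1 : (Mᵀ - 1).mulVecLin z = p.1 := congrArg Prod.fst hz
    have hz2 : A z = p.2 := congrArg Prod.snd hz
    rw [hB] at hz1
    have hp1 : p.1 = A (-z) := by simpa [map_neg] using hz1.symm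
    have hp2 : p.2 = A z := hz2.symm
    have : f ⟨p, hp⟩ = 0 := by
      have h1 : f1 ⟨p, hp⟩ = 0 := by
        simp only [f1, LinearMap.comp_apply]
        rw [Submodule.mkQ_apply, Submodule.Quotient.mk_eq_zero]
        exact ⟨-z, hp1.symm⟩
      have h2 : f2 ⟨p, hp⟩ = 0 := by
        apply Subtype.ext
        simp only [f2, LinearMap.codRestrict_apply, LinearMap.comp_apply,
          LinearMap.add_apply, LinearMap.fst_apply, LinearMap.snd_apply,
          Submodule.coe_subtype]
        show p.1 + p.2 = 0
        rw [hp1, hp2]; simp [← map_add]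
      exact Prod.ext h1 h2
    exact this
  let g := N.liftQ f hle
  have hg_inj : Function.Injective g := by
    rw [← LinearMap.ker_eq_bot]
    rw [Submodule.ker_liftQ]
    rw [Submodule.eq_bot_iff]
    intro q hq
    obtain ⟨⟨p, hp⟩, hpf, rfl⟩ := hq
    rw [Submodule.mkQ_apply, Submodule.Quotient.mk_eq_zero]
    have h1 : f1 ⟨p, hp⟩ = 0 := congrArg Prod.fst hpf
    have h2 : f2 ⟨p, hp⟩ = 0 := congrArg Prod.snd hpf
    have hp1 : p.1 ∈ LinearMap.range A := by
      simpa only [f1, LinearMap.comp_apply, Submodule.mkQ_apply,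
        Submodule.Quotient.mk_eq_zero, LinearMap.fst_apply,
        Submodule.coe_subtype] using h1
    have hp2 : p.1 + p.2 = 0 := congrArg Subtype.val h2
    obtain ⟨z, hz⟩ := hp1
    refine ⟨-z, ?_⟩
    have : p.2 = A (-z) := by
      have := hp2
      rw [← hz] at this
      have : p.2 = -A z := by linear_combination this
      simpa [map_neg] using this
    refine Prod.ext ?_ ?_
    · show (Mᵀ - 1).mulVecLin (-z) = p.1
      rw [hB]; simp [hz]
    · show A (-z) = p.2
      exact this.symm
  have hg_surj : Function.Surjective g := by
    rintro ⟨u, v⟩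
    obtain ⟨x, rfl⟩ := Submodule.Quotient.mk_surjective _ u
    have hv : A (v : Fin n → ℤ) = 0 := v.2
    have hmem : (x, (v : Fin n → ℤ) - x) ∈ K := by
      rw [hmemK]
      simp [map_sub, hv]
    refine ⟨Submodule.Quotient.mk ⟨(x, (v : Fin n → ℤ) - x), hmem⟩, ?_⟩
    have : g (Submodule.Quotient.mk ⟨(x, (v : Fin n → ℤ) - x), hmem⟩)
        = f ⟨(x, (v : Fin n → ℤ) - x), hmem⟩ := rfl
    rw [this]
    refine Prod.ext rfl ?_
    apply Subtype.ext
    show x + ((v : Fin n → ℤ) - x) = (v : Fin n → ℤ)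
    ring
  refine ⟨LinearEquiv.ofBijective g ⟨hg_inj, hg_surj⟩, ?_⟩
  intro x y hxy
  constructor
  · rfl
  · rfl
end

section
/- Let T_1, T_2 : Z^(Z) → Z^(Z) be the endomorphisms of the free abelian group on countably many generators δ_u (u ∈ Z) defined by T_1 δ_u = -δ_u - δ_{u+1} and T_2 δ_u = δ_u - n δ_{u+1}, where n ≥ 1 is a fixed positive integer. Then the cokernel of the map (T_1, T_2) : Z^(Z) ⊕ Z^(Z) → Z^(Z), (x,y) ↦ T_1 x + T_2 y, is a cyclic group of order n+1 generated by the class of δ_0. -/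
/-!
The alternating sum `σ x = ∑ᵤ (-1)ᵘ xᵤ` kills the image of `T₁` and multiplies by `n + 1` on
the image of `T₂`, so `σ` mod `n + 1` factors through the cokernel and sends the class of `δ₀`
to `1`. Conversely `T₁ δᵤ` says that `δᵤ₊₁ ≡ -δᵤ`, so every class `[x]` equals `σ x • [δ₀]`;
applied to `x = T₂ δ₀` this gives `(n + 1) • [δ₀] = 0`.
-/

open Finsupp

noncomputable def alternatingSum : (ℤ →₀ ℤ) →ₗ[ℤ] ℤ :=
  linearCombination ℤ fun u => (u.negOnePow : ℤ)

@[simp]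
theorem alternatingSum_single (u b : ℤ) : alternatingSum (single u b) = b * u.negOnePow := by
  simp [alternatingSum]

theorem eq_alternatingSum_smul_of_map_single_succ {G : Type*} [AddCommGroup G]
    (φ : (ℤ →₀ ℤ) →ₗ[ℤ] G) (hφ : ∀ u, φ (single (u + 1) 1) = -φ (single u 1))
    (x : ℤ →₀ ℤ) : φ x = alternatingSum x • φ (single 0 1) := by
  have hsingle (u : ℤ) : φ (single u 1) = (u.negOnePow : ℤ) • φ (single 0 1) := by
    induction u using Int.induction_on with
    | zero => simp
    | succ i ih => rw [hφ, ih, Int.negOnePow_succ, Units.val_neg, neg_smul]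
    | pred i ih =>
      rw [← neg_neg (φ _), ← hφ, sub_add_cancel, ih, Int.negOnePow_sub, Int.negOnePow_one]
      simp
  suffices φ = alternatingSum.smulRight (φ (single 0 1)) from LinearMap.congr_fun this x
  ext u
  simpa using hsingle u

theorem alternatingSum_map_of_map_single (T : (ℤ →₀ ℤ) →ₗ[ℤ] (ℤ →₀ ℤ)) (a b : ℤ)
    (hT : ∀ u, T (single u 1) = a • single u 1 + b • single (u + 1) 1) (x : ℤ →₀ ℤ) :
    alternatingSum (T x) = (a - b) * alternatingSum x := by
  suffices alternatingSum ∘ₗ T = (a - b) • alternatingSum from LinearMap.congr_fun this x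
  ext u
  simp [hT, Int.negOnePow_succ]
  ring

section Cokernel

variable {n : ℕ} {T1 T2 : (ℤ →₀ ℤ) →ₗ[ℤ] (ℤ →₀ ℤ)}

theorem alternatingSum_coprod_apply
    (hT1 : ∀ u : ℤ, T1 (single u 1) = -single u 1 - single (u + 1) 1)
    (hT2 : ∀ u : ℤ, T2 (single u 1) = single u 1 - (n : ℤ) • single (u + 1) 1)
    (x y : ℤ →₀ ℤ) :
    alternatingSum (T1.coprod T2 (x, y)) = (n + 1) * alternatingSum y := by
  have h1 := alternatingSum_map_of_map_single T1 (-1) (-1) (by simp [hT1, sub_eq_add_neg]) x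
  have h2 := alternatingSum_map_of_map_single T2 1 (-n) (by simp [hT2, sub_eq_add_neg]) y
  rw [LinearMap.coprod_apply, map_add, h1, h2]
  ring

theorem mkQ_single_add_one
    (hT1 : ∀ u : ℤ, T1 (single u 1) = -single u 1 - single (u + 1) 1) (u : ℤ) :
    (T1.coprod T2).range.mkQ (single (u + 1) 1) = -(T1.coprod T2).range.mkQ (single u 1) := by
  rw [← map_neg, Submodule.mkQ_apply, Submodule.mkQ_apply, Submodule.Quotient.eq]
  exact ⟨(-single u 1, 0), by simp [hT1]⟩

theorem mkQ_eq_alternatingSum_smul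
    (hT1 : ∀ u : ℤ, T1 (single u 1) = -single u 1 - single (u + 1) 1) (x : ℤ →₀ ℤ) :
    (T1.coprod T2).range.mkQ x = alternatingSum x • (T1.coprod T2).range.mkQ (single 0 1) :=
  eq_alternatingSum_smul_of_map_single_succ _ (mkQ_single_add_one hT1) x

theorem succ_nsmul_mkQ_single_zero
    (hT1 : ∀ u : ℤ, T1 (single u 1) = -single u 1 - single (u + 1) 1)
    (hT2 : ∀ u : ℤ, T2 (single u 1) = single u 1 - (n : ℤ) • single (u + 1) 1) :
    (n + 1) • (T1.coprod T2).range.mkQ (single 0 1) = 0 := by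
  have h := mkQ_eq_alternatingSum_smul (T2 := T2) hT1 (T1.coprod T2 (0, single 0 1))
  rw [alternatingSum_coprod_apply hT1 hT2, Submodule.mkQ_apply,
    (Submodule.Quotient.mk_eq_zero _).2 (LinearMap.mem_range_self _ _)] at h
  rw [← natCast_zsmul]
  simpa using h.symm

theorem exists_addMonoidHom_mkQ_single_zero_eq_one
    (hT1 : ∀ u : ℤ, T1 (single u 1) = -single u 1 - single (u + 1) 1)
    (hT2 : ∀ u : ℤ, T2 (single u 1) = single u 1 - (n : ℤ) • single (u + 1) 1) :
    ∃ ψ : ((ℤ →₀ ℤ) ⧸ (T1.coprod T2).range) →+ ZMod (n + 1),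
      ψ ((T1.coprod T2).range.mkQ (single 0 1)) = 1 := by
  let φ := (Int.castAddHom (ZMod (n + 1))).toIntLinearMap ∘ₗ alternatingSum
  have hφ : (T1.coprod T2).range ≤ LinearMap.ker φ := by
    rintro _ ⟨⟨x, y⟩, rfl⟩
    have h : ((n + 1 : ℕ) : ZMod (n + 1)) = 0 := ZMod.natCast_self _
    rw [LinearMap.mem_ker, LinearMap.comp_apply, alternatingSum_coprod_apply hT1 hT2]
    push_cast at h
    simp [h]
  exact ⟨((T1.coprod T2).range.liftQ φ hφ).toAddMonoidHom, by simp [φ]⟩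

end Cokernel

theorem skewproduct_coker_cyclic_general (n : ℕ)
    (T1 T2 : (ℤ →₀ ℤ) →ₗ[ℤ] (ℤ →₀ ℤ))
    (hT1 : ∀ u : ℤ, T1 (Finsupp.single u 1) =
      -Finsupp.single u 1 - Finsupp.single (u + 1) 1)
    (hT2 : ∀ u : ℤ, T2 (Finsupp.single u 1) =
      Finsupp.single u 1 - (n : ℤ) • Finsupp.single (u + 1) 1) :
    addOrderOf
        (Submodule.Quotient.mk (p := LinearMap.range (T1.coprod T2))
          (Finsupp.single 0 1)) = n + 1 ∧
    ∀ c : (ℤ →₀ ℤ) ⧸ LinearMap.range (T1.coprod T2), ∃ m : ℤ,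
      c = m • Submodule.Quotient.mk (p := LinearMap.range (T1.coprod T2))
        (Finsupp.single 0 1) := by
  refine ⟨Nat.dvd_antisymm ?_ ?_, fun c => ?_⟩
  · exact addOrderOf_dvd_of_nsmul_eq_zero (succ_nsmul_mkQ_single_zero hT1 hT2)
  · obtain ⟨ψ, hψ⟩ := exists_addMonoidHom_mkQ_single_zero_eq_one hT1 hT2
    have h := addOrderOf_map_dvd ψ ((T1.coprod T2).range.mkQ (single 0 1))
    rwa [hψ, ZMod.addOrderOf_one] at h
  · obtain ⟨x, rfl⟩ := (T1.coprod T2).range.mkQ_surjective c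
    exact ⟨alternatingSum x, mkQ_eq_alternatingSum_smul hT1 x⟩

/-- Let `T₁, T₂` be the endomorphisms of the free abelian group `ℤ^(ℤ)` with
`T₁ δᵤ = -δᵤ - δᵤ₊₁` and `T₂ δᵤ = δᵤ - n δᵤ₊₁` (`n ≥ 1`).  Then the cokernel of
`(x,y) ↦ T₁x + T₂y` is cyclic of order `n+1`, generated by the class of `δ₀`. -/
theorem skewproduct_coker_cyclic (n : ℕ) (hn : 1 ≤ n)
    (T1 T2 : (ℤ →₀ ℤ) →ₗ[ℤ] (ℤ →₀ ℤ))
    (hT1 : ∀ u : ℤ, T1 (Finsupp.single u 1) =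
      -Finsupp.single u 1 - Finsupp.single (u + 1) 1)
    (hT2 : ∀ u : ℤ, T2 (Finsupp.single u 1) =
      Finsupp.single u 1 - (n : ℤ) • Finsupp.single (u + 1) 1) :
    addOrderOf
        (Submodule.Quotient.mk (p := LinearMap.range (T1.coprod T2))
          (Finsupp.single 0 1)) = n + 1 ∧
    ∀ c : (ℤ →₀ ℤ) ⧸ LinearMap.range (T1.coprod T2), ∃ m : ℤ,
      c = m • Submodule.Quotient.mk (p := LinearMap.range (T1.coprod T2))
        (Finsupp.single 0 1) :=
  skewproduct_coker_cyclic_general n T1 T2 hT1 hT2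
end

section
/- With T_1, T_2 : Z^(Z) → Z^(Z) defined by T_1 δ_u = -δ_u - δ_{u+1} and T_2 δ_u = δ_u - n δ_{u+1} (n ≥ 1 a fixed integer), the quotient ker((T_1, T_2)) / im((-T_2; T_1)) is the trivial group, where (T_1,T_2)(x,y) = T_1 x + T_2 y and (-T_2; T_1)(z) = (-T_2 z, T_1 z). -/
/-!
Identify `ℤ^(ℤ)` with the Laurent polynomials `ℤ[t, t⁻¹]`, `δᵤ ↦ tᵘ`. Then `T₁` and `T₂` are
multiplication by `a = -(1 + t)` and `b = 1 - n t`, and the quotient is the first homology of the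
Koszul complex of `(a, b)`, which vanishes because `(a, b)` is a regular sequence: `ℤ[t, t⁻¹]` is a
domain, and modulo `1 + t`, i.e. after evaluating at `t = -1`, `b` becomes `1 + n ≠ 0`.
-/

open LaurentPolynomial

theorem LinearMap.ker_coprod_le_range_prod_neg {R M : Type*} [Ring R] [AddCommGroup M]
    [Module R M] {f g : Module.End R M} (hfg : Commute f g) (hf : Function.Injective f)
    (hg : ∀ y, g y ∈ range f → y ∈ range f) :
    ker (f.coprod g) ≤ range ((-g).prod f) := by
  rintro ⟨x, y⟩ hxy
  rw [mem_ker, coprod_apply] at hxy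
  obtain ⟨z, rfl⟩ := hg y ⟨-x, by rw [map_neg, neg_eq_of_add_eq_zero_right hxy]⟩
  have hx : x = -g z := by
    apply eq_neg_of_add_eq_zero_left
    apply hf
    rw [map_add, map_zero, ← Module.End.mul_apply, hfg.eq, Module.End.mul_apply, ← hxy]
  exact ⟨z, by simp [hx]⟩

theorem LaurentPolynomial.T_sub_C_dvd_iff {R : Type*} [CommRing R] (u : Rˣ) (p : R[T;T⁻¹]) :
    T 1 - C (u : R) ∣ p ↔ eval₂ (RingHom.id R) u p = 0 := by
  constructor
  · rintro ⟨q, rfl⟩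
    simp
  · intro hp
    obtain ⟨k, q, hq⟩ := exists_T_pow p
    have hroot : q.IsRoot u := by
      rw [Polynomial.IsRoot, ← Polynomial.eval₂_id, ← eval₂_toLaurent (x := u), hq, map_mul, hp,
        zero_mul]
    obtain ⟨r, rfl⟩ := Polynomial.dvd_iff_isRoot.mpr hroot
    refine ⟨Polynomial.toLaurent r * T (-k), ?_⟩
    rw [map_mul, map_sub, Polynomial.toLaurent_X, Polynomial.toLaurent_C] at hq
    calc p = p * T k * T (-k) := by rw [mul_assoc, ← T_add, add_neg_cancel, T_zero, mul_one]
      _ = _ := by rw [← hq, mul_assoc]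

theorem LaurentPolynomial.one_add_T_dvd_of_dvd_mul (n : ℕ) {p : ℤ[T;T⁻¹]}
    (h : 1 + T 1 ∣ (1 - (n : ℤ[T;T⁻¹]) * T 1) * p) : 1 + T 1 ∣ p := by
  have hdvd (q : ℤ[T;T⁻¹]) : 1 + T 1 ∣ q ↔ eval₂ (RingHom.id ℤ) (-1) q = 0 := by
    rw [← T_sub_C_dvd_iff, Units.val_neg, Units.val_one, map_neg, map_one, sub_neg_eq_add,
      add_comm]
  have hb : eval₂ (RingHom.id ℤ) (-1) (1 - (n : ℤ[T;T⁻¹]) * T 1) = 1 + n := by simp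
  rw [hdvd, map_mul, hb] at h
  exact (hdvd p).mpr ((mul_eq_zero.mp h).resolve_left (by omega))

open AddMonoidAlgebra in
theorem LaurentPolynomial.ofCoeff_apply_eq_mul {R : Type*} [CommRing R]
    (L : (ℤ →₀ R) →ₗ[R] (ℤ →₀ R)) (p : R[T;T⁻¹])
    (hL : ∀ u, ofCoeff (L (Finsupp.single u 1)) = p * T u) (x : ℤ →₀ R) :
    ofCoeff (L x) = p * ofCoeff x := by
  induction x using Finsupp.induction_linear with
  | zero => simp
  | add x y hx hy => rw [map_add, ofCoeff_add, hx, hy, ofCoeff_add, mul_add]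
  | single u r =>
    rw [← mul_one r, ← smul_eq_mul, ← Finsupp.smul_single, map_smul, ofCoeff_smul, hL,
      ofCoeff_smul, ofCoeff_single, mul_smul_comm]
    rfl

open AddMonoidAlgebra in
theorem skewproduct_K1_trivial_general (n : ℕ)
    (T1 T2 : (ℤ →₀ ℤ) →ₗ[ℤ] (ℤ →₀ ℤ))
    (hT1 : ∀ u : ℤ, T1 (Finsupp.single u 1) =
      -Finsupp.single u 1 - Finsupp.single (u + 1) 1)
    (hT2 : ∀ u : ℤ, T2 (Finsupp.single u 1) =
      Finsupp.single u 1 - (n : ℤ) • Finsupp.single (u + 1) 1) :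
    Subsingleton
      (↥(LinearMap.ker (T1.coprod T2)) ⧸
        (LinearMap.range (LinearMap.prod (-T2) T1)).comap
          (LinearMap.ker (T1.coprod T2)).subtype) := by
  have h1 := ofCoeff_apply_eq_mul T1 (-(1 + T 1)) fun u => by
    rw [hT1, ofCoeff_sub, ofCoeff_neg, ofCoeff_single, ofCoeff_single, ← T, ← T, T_add]
    ring
  have h2 := ofCoeff_apply_eq_mul T2 (1 - (n : ℤ[T;T⁻¹]) * T 1) fun u => by
    rw [hT2, ofCoeff_sub, ofCoeff_smul, ofCoeff_single, ofCoeff_single, ← T, ← T, T_add]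
    simp only [zsmul_eq_mul, Int.cast_natCast]
    ring
  have ha : -(1 + T 1 : ℤ[T;T⁻¹]) ≠ 0 := fun h => by
    simpa using congrArg (eval₂ (RingHom.id ℤ) 1) h
  rw [Submodule.Quotient.subsingleton_iff, Submodule.comap_subtype_eq_top]
  refine LinearMap.ker_coprod_le_range_prod_neg ?_ ?_ ?_
  · refine LinearMap.ext fun x => ofCoeff_injective ?_
    simp only [Module.End.mul_apply, h1, h2, mul_left_comm]
  · exact fun x y hxy => ofCoeff_injective <| mul_left_cancel₀ ha <| by rw [← h1, ← h1, hxy]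
  · rintro y ⟨z, hz⟩
    have hdvd : 1 + T 1 ∣ (1 - (n : ℤ[T;T⁻¹]) * T 1) * ofCoeff y :=
      ⟨-ofCoeff z, by rw [← h2, ← hz, h1]; ring⟩
    obtain ⟨w, hw⟩ := one_add_T_dvd_of_dvd_mul n hdvd
    refine ⟨-w.coeff, ofCoeff_injective ?_⟩
    rw [map_neg, ofCoeff_neg, h1, ofCoeff_coeff, hw]
    ring

/-- With `T₁ δᵤ = -δᵤ - δᵤ₊₁` and `T₂ δᵤ = δᵤ - n δᵤ₊₁` (`n ≥ 1`) on `ℤ^(ℤ)`,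
the quotient `ker((T₁,T₂)) / im((-T₂; T₁))` is the trivial group. -/
theorem skewproduct_K1_trivial (n : ℕ) (hn : 1 ≤ n)
    (T1 T2 : (ℤ →₀ ℤ) →ₗ[ℤ] (ℤ →₀ ℤ))
    (hT1 : ∀ u : ℤ, T1 (Finsupp.single u 1) =
      -Finsupp.single u 1 - Finsupp.single (u + 1) 1)
    (hT2 : ∀ u : ℤ, T2 (Finsupp.single u 1) =
      Finsupp.single u 1 - (n : ℤ) • Finsupp.single (u + 1) 1) :
    Subsingleton
      (↥(LinearMap.ker (T1.coprod T2)) ⧸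
        (LinearMap.range (LinearMap.prod (-T2) T1)).comap
          (LinearMap.ker (T1.coprod T2)).subtype) :=
  skewproduct_K1_trivial_general n T1 T2 hT1 hT2
end
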